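/- For every dimension d ≥ 1 there is a constant c > 0 depending only on d such that the following holds. Let φ : ℝ^d → ℝ be a smooth function supported in {x : |x|_∞ ≤ 1/2}, and for ε > 0 set φ_ε(x) = ε^{−d} φ(x/ε). Let N ≥ 1, h > 0, ε > 0, let w₁, …, w_N be nonnegative reals with w_i ≤ W for all i, and let a₁, …, a_N, b₁, …, b_N ∈ ℝ^d. Then ‖ Σ_{i=1}^N h^d w_i (φ_ε(· − a_i) − φ_ε(· − b_i)) ‖_{L²(ℝ^d)} ≤ c · W · (max_{k=1,…,d} ‖∂φ/∂x_k‖_∞) · ε^{−d/2−1} · h^d Σ_{i=1}^N |a_i − b_i|. -/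

import Mathlib

open MeasureTheory

section AuxLemmas

variable {d : ℕ}

lemma aux_coord_le_norm (y : EuclideanSpace ℝ (Fin d)) (k : Fin d) : |y k| ≤ ‖y‖ := by
  rw [EuclideanSpace.norm_eq]
  calc |y k| = Real.sqrt (‖y k‖ ^ 2) := by
        rw [Real.norm_eq_abs, Real.sqrt_sq_eq_abs, abs_abs]
    _ ≤ _ := Real.sqrt_le_sqrt (Finset.single_le_sum
        (f := fun i => ‖y i‖ ^ 2) (fun i _ => by positivity) (Finset.mem_univ k))

lemma aux_decomp (y : EuclideanSpace ℝ (Fin d)) :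
    y = ∑ k, y k • EuclideanSpace.single k (1 : ℝ) := by
  ext j
  have : (∑ k, y k • EuclideanSpace.single k (1 : ℝ)) j
      = ∑ k, y k * (EuclideanSpace.single k (1 : ℝ)) j := by
    rw [WithLp.ofLp_sum, Finset.sum_apply]
    rfl
  rw [this]
  simp [EuclideanSpace.single_apply]

lemma aux_fderiv_norm_le (φ : EuclideanSpace ℝ (Fin d) → ℝ) {M : ℝ} (hM0 : 0 ≤ M)
    (hMk : ∀ (k : Fin d) (x : EuclideanSpace ℝ (Fin d)),
      |fderiv ℝ φ x (EuclideanSpace.single k 1)| ≤ M)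
    (x : EuclideanSpace ℝ (Fin d)) : ‖fderiv ℝ φ x‖ ≤ d * M := by
  refine ContinuousLinearMap.opNorm_le_bound _ (by positivity) fun y => ?_
  have hdec : fderiv ℝ φ x y
      = ∑ k, y k * fderiv ℝ φ x (EuclideanSpace.single k 1) := by
    conv_lhs => rw [aux_decomp y]
    rw [map_sum]
    simp [smul_eq_mul]
  rw [Real.norm_eq_abs, hdec]
  calc |∑ k, y k * fderiv ℝ φ x (EuclideanSpace.single k 1)|
      ≤ ∑ k, |y k * fderiv ℝ φ x (EuclideanSpace.single k 1)| :=
        Finset.abs_sum_le_sum_abs _ _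
    _ ≤ ∑ _k : Fin d, ‖y‖ * M := Finset.sum_le_sum fun k _ => by
        rw [abs_mul]
        exact mul_le_mul (aux_coord_le_norm y k) (hMk k x) (abs_nonneg _) (norm_nonneg _)
    _ = d * M * ‖y‖ := by simp [Finset.sum_const, Finset.card_univ]; ring

lemma aux_lip (φ : EuclideanSpace ℝ (Fin d) → ℝ) (hφ : ContDiff ℝ (⊤ : ℕ∞) φ) {M : ℝ} (hM0 : 0 ≤ M)
    (hMk : ∀ (k : Fin d) (x : EuclideanSpace ℝ (Fin d)),
      |fderiv ℝ φ x (EuclideanSpace.single k 1)| ≤ M)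
    (u v : EuclideanSpace ℝ (Fin d)) : |φ u - φ v| ≤ d * M * ‖u - v‖ := by
  have := Convex.norm_image_sub_le_of_norm_fderiv_le
    (f := φ) (C := d * M) (s := Set.univ)
    (fun x _ => (hφ.differentiable (by simp)).differentiableAt)
    (fun x _ => aux_fderiv_norm_le φ hM0 hMk x)
    convex_univ (Set.mem_univ v) (Set.mem_univ u)
  simpa [Real.norm_eq_abs] using this

lemma aux_box_isCompact (p : EuclideanSpace ℝ (Fin d)) (r : ℝ) :
    IsCompact {x : EuclideanSpace ℝ (Fin d) | ∀ i, |x i - p i| ≤ r} := by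
  have hset : {x : EuclideanSpace ℝ (Fin d) | ∀ i, |x i - p i| ≤ r}
      = (PiLp.continuousLinearEquiv 2 ℝ (fun _ : Fin d => ℝ)).toHomeomorph ⁻¹'
        (Set.univ.pi fun i => Set.Icc (p i - r) (p i + r)) := by
    ext x
    simp only [Set.mem_setOf_eq, Set.mem_preimage, Set.mem_pi, Set.mem_univ, Set.mem_Icc,
      forall_true_left]
    refine forall_congr' fun i => ?_
    rw [abs_le]
    constructor
    · rintro ⟨h1, h2⟩; constructor <;> [skip; skip] <;> dsimp [PiLp.coe_continuousLinearEquiv] <;> linarith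
    · rintro ⟨h1, h2⟩
      dsimp [PiLp.coe_continuousLinearEquiv] at h1 h2
      constructor <;> linarith
  rw [hset]
  exact (Homeomorph.isCompact_preimage _).2 (isCompact_univ_pi fun i => isCompact_Icc)

lemma aux_box_volume (p : EuclideanSpace ℝ (Fin d)) (r : ℝ) :
    volume {x : EuclideanSpace ℝ (Fin d) | ∀ i, |x i - p i| ≤ r}
      = ENNReal.ofReal (2 * r) ^ d := by
  have hset : {x : EuclideanSpace ℝ (Fin d) | ∀ i, |x i - p i| ≤ r}
      = (MeasurableEquiv.toLp 2 (Fin d → ℝ)).symm ⁻¹'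
        (Set.univ.pi fun i => Set.Icc (p i - r) (p i + r)) := by
    ext x
    simp only [Set.mem_setOf_eq, Set.mem_preimage, MeasurableEquiv.coe_toLp_symm,
      Set.mem_pi, Set.mem_univ, Set.mem_Icc, forall_true_left]
    refine forall_congr' fun i => ?_
    rw [abs_le]
    constructor
    · rintro ⟨h1, h2⟩
      constructor <;> [skip; skip] <;>
        linarith
    · rintro ⟨h1, h2⟩
      constructor <;> linarith
  rw [hset, (EuclideanSpace.volume_preserving_symm_measurableEquiv_toLp (Fin d)).measure_preimage
    ((MeasurableSet.univ_pi fun i => measurableSet_Icc).nullMeasurableSet)]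
  rw [volume_pi_pi]
  simp only [Real.volume_Icc]
  have h2r : ∀ q : ℝ, q + r - (q - r) = 2 * r := fun q => by ring
  simp only [h2r]
  rw [Finset.prod_const, Finset.card_univ, Fintype.card_fin]

lemma aux_toReal_eLpNorm_two {α : Type*} [MeasurableSpace α] {μ : Measure α} {f : α → ℝ}
    (hf : MemLp f 2 μ) :
    (eLpNorm f 2 μ).toReal = Real.sqrt (∫ x, (f x) ^ 2 ∂μ) := by
  rw [hf.eLpNorm_eq_integral_rpow_norm two_ne_zero ENNReal.ofNat_ne_top]
  have h2 : (2 : ENNReal).toReal = (2 : ℝ) := by simp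
  rw [ENNReal.toReal_ofReal (by positivity)]
  rw [h2]
  have hint : ∫ x, ‖f x‖ ^ (2 : ℝ) ∂μ = ∫ x, (f x) ^ 2 ∂μ := by
    refine integral_congr_ae (Filter.Eventually.of_forall fun x => ?_)
    show ‖f x‖ ^ (2 : ℝ) = f x ^ 2
    rw [show (2 : ℝ) = ((2 : ℕ) : ℝ) by norm_num, Real.rpow_natCast, Real.norm_eq_abs, sq_abs]
  rw [hint, Real.sqrt_eq_rpow]
  norm_num

end AuxLemmas

/-- Deterministic L²-stability estimate for regularized empirical measures
`ρ(x) = Σᵢ h^d wᵢ φ_ε(x - aᵢ)` (with `φ_ε(x) = ε^{-d} φ(x/ε)`) with respect to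
perturbations of the particle locations. -/
theorem empirical_measure_L2_stability (d : ℕ) (hd : 1 ≤ d) :
    ∃ c > 0, ∀ φ : EuclideanSpace ℝ (Fin d) → ℝ, ContDiff ℝ (⊤ : ℕ∞) φ →
      (∀ x : EuclideanSpace ℝ (Fin d), (∃ i, 1 / 2 < |x i|) → φ x = 0) →
      ∀ N : ℕ, 1 ≤ N → ∀ h ε : ℝ, 0 < h → 0 < ε →
      ∀ (w : Fin N → ℝ) (W : ℝ), (∀ i, 0 ≤ w i) → (∀ i, w i ≤ W) →
      ∀ a b : Fin N → EuclideanSpace ℝ (Fin d),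
        Real.sqrt (∫ x, (∑ i, h ^ d * w i *
            ((ε ^ d)⁻¹ * φ (ε⁻¹ • (x - a i)) - (ε ^ d)⁻¹ * φ (ε⁻¹ • (x - b i)))) ^ 2)
          ≤ c * W
            * (⨆ k : Fin d, ⨆ x : EuclideanSpace ℝ (Fin d),
                |fderiv ℝ φ x (EuclideanSpace.single k 1)|)
            * ε ^ (-(d : ℝ) / 2 - 1) * (h ^ d * ∑ i, ‖a i - b i‖) := by
  have hdpos : (0 : ℝ) < d := by exact_mod_cast hd
  refine ⟨Real.sqrt 2 * d, mul_pos (Real.sqrt_pos.2 two_pos) hdpos, ?_⟩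
  intro φ hφ hφsupp N hN h ε hh hε w W hw hwW a b
  haveI : Nonempty (Fin d) := ⟨⟨0, hd⟩⟩
  set M := ⨆ k : Fin d, ⨆ x : EuclideanSpace ℝ (Fin d),
    |fderiv ℝ φ x (EuclideanSpace.single k 1)| with hMdef
  -- compact support of φ
  have hφc : HasCompactSupport φ := by
    apply HasCompactSupport.intro (aux_box_isCompact (0 : EuclideanSpace ℝ (Fin d)) (1 / 2))
    intro x hx
    simp only [Set.mem_setOf_eq, not_forall, not_le] at hx
    refine hφsupp x ?_
    obtain ⟨i, hi⟩ := hx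
    exact ⟨i, by simpa using hi⟩
  -- boundedness of partial derivatives
  have hbdd : ∀ k : Fin d, BddAbove (Set.range fun x : EuclideanSpace ℝ (Fin d) =>
      |fderiv ℝ φ x (EuclideanSpace.single k 1)|) := by
    intro k
    have hcont : Continuous fun x : EuclideanSpace ℝ (Fin d) =>
        fderiv ℝ φ x (EuclideanSpace.single k 1) :=
      (hφ.continuous_fderiv (by simp)).clm_apply continuous_const
    have hcs : HasCompactSupport fun x : EuclideanSpace ℝ (Fin d) =>
        fderiv ℝ φ x (EuclideanSpace.single k 1) :=
      hφc.fderiv_apply ℝ (EuclideanSpace.single k 1)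
    obtain ⟨C, hC⟩ := hcs.exists_bound_of_continuous hcont
    exact ⟨C, by rintro _ ⟨x, rfl⟩; simpa [Real.norm_eq_abs] using hC x⟩
  have hMk : ∀ (k : Fin d) (x : EuclideanSpace ℝ (Fin d)),
      |fderiv ℝ φ x (EuclideanSpace.single k 1)| ≤ M := by
    intro k x
    calc |fderiv ℝ φ x (EuclideanSpace.single k 1)|
        ≤ ⨆ x : EuclideanSpace ℝ (Fin d), |fderiv ℝ φ x (EuclideanSpace.single k 1)| :=
          le_ciSup (hbdd k) x
      _ ≤ M := by
          rw [hMdef]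
          exact le_ciSup (f := fun k : Fin d => ⨆ x : EuclideanSpace ℝ (Fin d),
            |fderiv ℝ φ x (EuclideanSpace.single k 1)|)
            (Set.Finite.bddAbove (Set.finite_range _)) k
  have hM0 : 0 ≤ M := le_trans (abs_nonneg _) (hMk ⟨0, hd⟩ 0)
  have hW0 : 0 ≤ W := le_trans (hw ⟨0, hN⟩) (hwW ⟨0, hN⟩)
  -- the individual bump differences
  set g : Fin N → EuclideanSpace ℝ (Fin d) → ℝ := fun i x =>
    h ^ d * w i * ((ε ^ d)⁻¹ * φ (ε⁻¹ • (x - a i)) - (ε ^ d)⁻¹ * φ (ε⁻¹ • (x - b i))) with hg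
  have hgc : ∀ i, Continuous (g i) := by
    intro i
    apply continuous_const.mul
    apply Continuous.sub <;>
      exact continuous_const.mul (hφ.continuous.comp
        (((continuous_id.sub continuous_const)).const_smul ε⁻¹))
  -- support sets
  set U : Fin N → Set (EuclideanSpace ℝ (Fin d)) := fun i =>
    {x | ∀ j, |x j - a i j| ≤ ε / 2} ∪ {x | ∀ j, |x j - b i j| ≤ ε / 2} with hU
  have hUcomp : ∀ i, IsCompact (U i) := fun i =>
    (aux_box_isCompact _ _).union (aux_box_isCompact _ _)
  have hgU : ∀ i x, x ∉ U i → g i x = 0 := by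
    intro i x hx
    rw [hU, Set.mem_union] at hx
    push_neg at hx
    obtain ⟨h1, h2⟩ := hx
    simp only [Set.mem_setOf_eq, not_forall, not_le] at h1 h2
    have key : ∀ p : EuclideanSpace ℝ (Fin d), (∃ j, ε / 2 < |x j - p j|) →
        φ (ε⁻¹ • (x - p)) = 0 := by
      intro p ⟨j, hj⟩
      refine hφsupp _ ⟨j, ?_⟩
      have happ : (ε⁻¹ • (x - p)) j = ε⁻¹ * (x j - p j) := rfl
      rw [happ, abs_mul, abs_of_pos (inv_pos.2 hε)]
      calc (1 : ℝ) / 2 = ε⁻¹ * (ε / 2) := by field_simp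
        _ < ε⁻¹ * |x j - p j| := by
            exact mul_lt_mul_of_pos_left hj (inv_pos.2 hε)
    simp only [hg]
    simp [key _ h1, key _ h2]
  have hgcs : ∀ i, HasCompactSupport (g i) := fun i =>
    HasCompactSupport.intro (hUcomp i) (hgU i)
  have hgmem : ∀ i, MemLp (g i) 2 (volume : Measure (EuclideanSpace ℝ (Fin d))) := fun i =>
    (hgc i).memLp_of_hasCompactSupport (hgcs i)
  -- pointwise bound
  set C : Fin N → ℝ := fun i =>
    h ^ d * W * ((ε ^ d)⁻¹ * (d * M * (ε⁻¹ * ‖a i - b i‖))) with hC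
  have hεd : (0 : ℝ) < ε ^ d := pow_pos hε d
  have hCnn : ∀ i, 0 ≤ C i := by
    intro i
    simp only [hC]
    have := norm_nonneg (a i - b i)
    positivity
  have hgbound : ∀ i x, |g i x| ≤ C i := by
    intro i x
    have hdiff : ε⁻¹ • (x - a i) - ε⁻¹ • (x - b i) = ε⁻¹ • (b i - a i) := by
      rw [← smul_sub]
      congr 1
      abel
    have hnorm : ‖ε⁻¹ • (x - a i) - ε⁻¹ • (x - b i)‖ = ε⁻¹ * ‖a i - b i‖ := by
      rw [hdiff, norm_smul, Real.norm_eq_abs, abs_of_pos (inv_pos.2 hε), norm_sub_rev]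
    have hlip := aux_lip φ hφ hM0 hMk (ε⁻¹ • (x - a i)) (ε⁻¹ • (x - b i))
    rw [hnorm] at hlip
    have h1 : |g i x| = h ^ d * w i * (ε ^ d)⁻¹
        * |φ (ε⁻¹ • (x - a i)) - φ (ε⁻¹ • (x - b i))| := by
      simp only [hg]
      rw [show h ^ d * w i * ((ε ^ d)⁻¹ * φ (ε⁻¹ • (x - a i)) - (ε ^ d)⁻¹ * φ (ε⁻¹ • (x - b i)))
          = h ^ d * w i * (ε ^ d)⁻¹ * (φ (ε⁻¹ • (x - a i)) - φ (ε⁻¹ • (x - b i))) by ring]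
      rw [abs_mul]
      congr 1
      rw [abs_of_nonneg]
      have := hw i
      positivity
    rw [h1]
    simp only [hC]
    calc h ^ d * w i * (ε ^ d)⁻¹ * |φ (ε⁻¹ • (x - a i)) - φ (ε⁻¹ • (x - b i))|
        ≤ h ^ d * W * (ε ^ d)⁻¹ * (d * M * (ε⁻¹ * ‖a i - b i‖)) := by
          apply mul_le_mul
          · apply mul_le_mul_of_nonneg_right (mul_le_mul_of_nonneg_left (hwW i) (by positivity))
            positivity
          · calc |φ (ε⁻¹ • (x - a i)) - φ (ε⁻¹ • (x - b i))|
                ≤ d * M * (ε⁻¹ * ‖a i - b i‖) := hlip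
              _ = d * M * (ε⁻¹ * ‖a i - b i‖) := rfl
          · exact abs_nonneg _
          · positivity
      _ = h ^ d * W * ((ε ^ d)⁻¹ * (d * M * (ε⁻¹ * ‖a i - b i‖))) := by ring
  -- volume bound
  have hUvol : ∀ i, (volume (U i)).toReal ≤ 2 * ε ^ d := by
    intro i
    have hle : volume (U i) ≤ ENNReal.ofReal (2 * ε ^ d) := by
      calc volume (U i) ≤ volume {x : EuclideanSpace ℝ (Fin d) | ∀ j, |x j - a i j| ≤ ε / 2}
            + volume {x : EuclideanSpace ℝ (Fin d) | ∀ j, |x j - b i j| ≤ ε / 2} :=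
          measure_union_le _ _
        _ = ENNReal.ofReal (ε ^ d) + ENNReal.ofReal (ε ^ d) := by
            rw [aux_box_volume, aux_box_volume]
            rw [show 2 * (ε / 2) = ε by ring, ← ENNReal.ofReal_pow hε.le]
        _ = ENNReal.ofReal (2 * ε ^ d) := by
            rw [← ENNReal.ofReal_add (by positivity) (by positivity)]
            congr 1
            ring
    calc (volume (U i)).toReal ≤ (ENNReal.ofReal (2 * ε ^ d)).toReal :=
          ENNReal.toReal_mono ENNReal.ofReal_ne_top hle
      _ = 2 * ε ^ d := ENNReal.toReal_ofReal (by positivity)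
  -- per-particle L² bound
  have hint : ∀ i, ∫ x, (g i x) ^ 2 ≤ C i ^ 2 * (2 * ε ^ d) := by
    intro i
    have hsuppsub : Function.support (fun x => (g i x) ^ 2) ⊆ U i := by
      intro x hx
      by_contra hmem
      exact hx (by simp [hgU i x hmem])
    have hUm : MeasurableSet (U i) := (hUcomp i).isClosed.measurableSet
    have heq : ∫ x, (g i x) ^ 2 = ∫ x in U i, (g i x) ^ 2 := by
      rw [← integral_indicator hUm, Set.indicator_eq_self.2 hsuppsub]
    have hb : ‖∫ x in U i, (g i x) ^ 2‖ ≤ C i ^ 2 * (volume (U i)).toReal := by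
      apply norm_setIntegral_le_of_norm_le_const ((hUcomp i).measure_lt_top)
      intro x _
      rw [Real.norm_eq_abs, abs_of_nonneg (sq_nonneg _), ← sq_abs]
      exact pow_le_pow_left₀ (abs_nonneg _) (hgbound i x) 2
    calc ∫ x, (g i x) ^ 2 = ∫ x in U i, (g i x) ^ 2 := heq
      _ ≤ ‖∫ x in U i, (g i x) ^ 2‖ := le_abs_self _
      _ ≤ C i ^ 2 * (volume (U i)).toReal := hb
      _ ≤ C i ^ 2 * (2 * ε ^ d) := by
          exact mul_le_mul_of_nonneg_left (hUvol i) (sq_nonneg _)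
  have hgL2 : ∀ i, Real.sqrt (∫ x, (g i x) ^ 2) ≤ C i * Real.sqrt (2 * ε ^ d) := by
    intro i
    calc Real.sqrt (∫ x, (g i x) ^ 2) ≤ Real.sqrt (C i ^ 2 * (2 * ε ^ d)) :=
          Real.sqrt_le_sqrt (hint i)
      _ = C i * Real.sqrt (2 * ε ^ d) := by
          rw [Real.sqrt_mul (sq_nonneg _), Real.sqrt_sq (hCnn i)]
  -- L² triangle inequality
  have hfmem : MemLp (∑ i, g i) 2 (volume : Measure (EuclideanSpace ℝ (Fin d))) :=
    memLp_finset_sum' _ (fun i _ => hgmem i)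
  have hkey : eLpNorm (∑ i, g i) 2 (volume : Measure (EuclideanSpace ℝ (Fin d)))
      ≤ ∑ i, eLpNorm (g i) 2 (volume : Measure (EuclideanSpace ℝ (Fin d))) :=
    eLpNorm_sum_le (fun i _ => (hgmem i).aestronglyMeasurable) one_le_two
  have hsum_ne_top : (∑ i, eLpNorm (g i) 2 (volume : Measure (EuclideanSpace ℝ (Fin d)))) ≠ ⊤ :=
    (ENNReal.sum_lt_top.2 fun i _ => (hgmem i).eLpNorm_lt_top).ne
  -- ε powers
  have hP : Real.sqrt (2 * ε ^ d) = Real.sqrt 2 * (ε ^ d * ε * ε ^ (-(d : ℝ) / 2 - 1)) := by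
    have h1 : ε ^ d * ε * ε ^ (-(d : ℝ) / 2 - 1) = ε ^ ((d : ℝ) / 2) := by
      rw [← Real.rpow_natCast ε d]
      nth_rewrite 2 [← Real.rpow_one ε]
      rw [← Real.rpow_add hε, ← Real.rpow_add hε]
      congr 1
      ring
    have h2 : ε ^ ((d : ℝ) / 2) = Real.sqrt (ε ^ d) := by
      rw [Real.sqrt_eq_rpow, ← Real.rpow_natCast ε d, ← Real.rpow_mul hε.le]
      congr 1
      ring
    rw [h1, h2, Real.sqrt_mul (by norm_num)]
  -- final chain
  calc Real.sqrt (∫ x, (∑ i, h ^ d * w i *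
          ((ε ^ d)⁻¹ * φ (ε⁻¹ • (x - a i)) - (ε ^ d)⁻¹ * φ (ε⁻¹ • (x - b i)))) ^ 2)
      = Real.sqrt (∫ x, ((∑ i, g i) x) ^ 2) := by
        congr 1
        refine integral_congr_ae (Filter.Eventually.of_forall fun x => ?_)
        show (∑ i, g i x) ^ 2 = ((∑ i, g i) x) ^ 2
        rw [Finset.sum_apply]
    _ = (eLpNorm (∑ i, g i) 2 (volume : Measure (EuclideanSpace ℝ (Fin d)))).toReal :=
        (aux_toReal_eLpNorm_two hfmem).symm
    _ ≤ (∑ i, eLpNorm (g i) 2 (volume : Measure (EuclideanSpace ℝ (Fin d)))).toReal :=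
        ENNReal.toReal_mono hsum_ne_top hkey
    _ = ∑ i, (eLpNorm (g i) 2 (volume : Measure (EuclideanSpace ℝ (Fin d)))).toReal :=
        ENNReal.toReal_sum fun i _ => (hgmem i).eLpNorm_lt_top.ne
    _ = ∑ i, Real.sqrt (∫ x, (g i x) ^ 2) :=
        Finset.sum_congr rfl fun i _ => aux_toReal_eLpNorm_two (hgmem i)
    _ ≤ ∑ i, C i * Real.sqrt (2 * ε ^ d) := Finset.sum_le_sum fun i _ => hgL2 i
    _ = Real.sqrt 2 * d * W * M * ε ^ (-(d : ℝ) / 2 - 1) * (h ^ d * ∑ i, ‖a i - b i‖) := by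
        rw [Finset.mul_sum, Finset.mul_sum]
        refine Finset.sum_congr rfl fun i _ => ?_
        simp only [hC]
        rw [hP]
        have hεne : ε ≠ 0 := hε.ne'
        have hεdne : ε ^ d ≠ 0 := hεd.ne'
        field_simp
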